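/- arXiv:1910.03150 — 5 statements merged into one kernel-verified Lean document; each statement's English description precedes it below -/
import Mathlib

section
/- Let N ≥ 2, η = exp(2πi/N), and let d be an integer with 1 ≤ d ≤ N-1. Then the sum over p from 1 to N-1 of η^{dp}/(η^p - 1) equals N/2 + 1/2 - d. -/
/-!
Writing `ζ ^ (d * p) / (ζ ^ p - 1) = ∑ k < d, ζ ^ (k * p) + (ζ ^ p - 1)⁻¹` splits the sum into
the sums `∑ p, ζ ^ (k * p)`, which equal `N - 1` for `k = 0` and `-1` for `0 < k < N`, plus
`∑ p, (ζ ^ p - 1)⁻¹`, which equals `(1 - N) / 2` because the terms for `p` and `N - p` add up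
to `-1`.
-/

open Finset

section

variable {K : Type*} [Field K]

theorem pow_div_sub_one_eq_geom_sum_add_inv {x : K} (hx : x ≠ 1) (d : ℕ) :
    x ^ d / (x - 1) = ∑ k ∈ range d, x ^ k + (x - 1)⁻¹ := by
  have hx' : x - 1 ≠ 0 := sub_ne_zero.mpr hx
  rw [geom_sum_eq hx]
  field_simp
  ring

theorem inv_sub_one_add_inv_inv_sub_one {x : K} (hx0 : x ≠ 0) (hx1 : x ≠ 1) :
    (x - 1)⁻¹ + (x⁻¹ - 1)⁻¹ = -1 := by
  have hx' : x - 1 ≠ 0 := sub_ne_zero.mpr hx1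
  have hinv : x⁻¹ - 1 = -(x - 1) / x := by field_simp; ring
  rw [hinv]
  field_simp
  ring

namespace IsPrimitiveRoot

variable {ζ : K} {N : ℕ}

theorem sum_Ico_one_pow_mul (hζ : IsPrimitiveRoot ζ N) {d : ℕ} (hd0 : 0 < d) (hdN : d < N) :
    ∑ p ∈ Ico 1 N, ζ ^ (d * p) = -1 := by
  have hgeom : ∑ p ∈ range N, (ζ ^ d) ^ p = 0 := by
    rw [geom_sum_eq (hζ.pow_ne_one_of_pos_of_lt hd0.ne' hdN), ← pow_mul, mul_comm, pow_mul,
      hζ.pow_eq_one, one_pow, sub_self, zero_div]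
  rw [sum_range_eq_add_Ico _ (hd0.trans hdN)] at hgeom
  simp only [pow_mul] at hgeom ⊢
  linear_combination hgeom

theorem two_mul_sum_Ico_one_inv_pow_sub_one (hζ : IsPrimitiveRoot ζ N) (hN : N ≠ 0) :
    2 * ∑ p ∈ Ico 1 N, (ζ ^ p - 1)⁻¹ = 1 - N := by
  have hpair : ∀ p ∈ Ico 1 N, (ζ ^ p - 1)⁻¹ + (ζ ^ (N - p) - 1)⁻¹ = -1 := by
    intro p hp
    obtain ⟨hp1, hpN⟩ := mem_Ico.mp hp
    rw [pow_sub₀ _ (hζ.ne_zero hN) hpN.le, hζ.pow_eq_one, one_mul]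
    exact inv_sub_one_add_inv_inv_sub_one (pow_ne_zero _ (hζ.ne_zero hN))
      (hζ.pow_ne_one_of_pos_of_lt (by omega) hpN)
  have hreflect : ∑ p ∈ Ico 1 N, (ζ ^ (N - p) - 1)⁻¹ = ∑ p ∈ Ico 1 N, (ζ ^ p - 1)⁻¹ := by
    rw [sum_Ico_reflect (fun p => (ζ ^ p - 1)⁻¹) 1 N.le_succ]
    simp
  calc 2 * ∑ p ∈ Ico 1 N, (ζ ^ p - 1)⁻¹
      = ∑ p ∈ Ico 1 N, ((ζ ^ p - 1)⁻¹ + (ζ ^ (N - p) - 1)⁻¹) := by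
        rw [sum_add_distrib, hreflect, two_mul]
    _ = 1 - N := by
        rw [sum_congr rfl hpair, sum_const, Nat.card_Ico, nsmul_eq_mul,
          Nat.cast_sub (Nat.one_le_iff_ne_zero.mpr hN)]
        ring

theorem two_mul_sum_Ico_one_pow_mul_div_pow_sub_one (hζ : IsPrimitiveRoot ζ N) {d : ℕ}
    (hd0 : 0 < d) (hdN : d < N) :
    2 * ∑ p ∈ Ico 1 N, ζ ^ (d * p) / (ζ ^ p - 1) = N + 1 - 2 * d := by
  obtain ⟨e, rfl⟩ : ∃ e, d = e + 1 := ⟨d - 1, by omega⟩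
  have hsplit : ∑ p ∈ Ico 1 N, ζ ^ ((e + 1) * p) / (ζ ^ p - 1)
      = ∑ k ∈ range (e + 1), ∑ p ∈ Ico 1 N, ζ ^ (k * p) + ∑ p ∈ Ico 1 N, (ζ ^ p - 1)⁻¹ := by
    rw [sum_comm, ← sum_add_distrib]
    refine sum_congr rfl fun p hp => ?_
    obtain ⟨hp1, hpN⟩ := mem_Ico.mp hp
    rw [mul_comm, pow_mul, pow_div_sub_one_eq_geom_sum_add_inv
      (hζ.pow_ne_one_of_pos_of_lt (by omega) hpN)]
    simp only [← pow_mul, mul_comm]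
  rw [hsplit, mul_add, two_mul_sum_Ico_one_inv_pow_sub_one hζ (by omega), sum_range_succ',
    sum_congr rfl fun k hk => hζ.sum_Ico_one_pow_mul k.succ_pos (by rw [mem_range] at hk; omega)]
  simp only [zero_mul, pow_zero, sum_const, card_range, Nat.card_Ico, nsmul_eq_mul, mul_neg,
    mul_one]
  rw [Nat.cast_sub (by omega)]
  push_cast
  ring

end IsPrimitiveRoot

end

theorem sum_root_pow_div_root_sub_one_general (N : ℕ) (d : ℤ)
    (hd1 : 1 ≤ d) (hd2 : d ≤ (N : ℤ) - 1) :
    ∑ p ∈ Finset.Icc 1 (N - 1),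
      Complex.exp (2 * Real.pi * Complex.I / N) ^ (d * (p : ℤ)) /
        (Complex.exp (2 * Real.pi * Complex.I / N) ^ p - 1)
      = (N : ℂ) / 2 + 1 / 2 - (d : ℂ) := by
  have hζ := Complex.isPrimitiveRoot_exp N (by omega)
  lift d to ℕ using (by omega)
  have key := hζ.two_mul_sum_Ico_one_pow_mul_div_pow_sub_one (d := d) (by omega) (by omega)
  rw [Finset.Icc_sub_one_right_eq_Ico_of_not_isMin (not_isMin_iff_ne_bot.mpr (by rw [Nat.bot_eq_zero]; omega))]
  simp only [← Nat.cast_mul, zpow_natCast]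
  push_cast
  linear_combination key / 2

theorem sum_root_pow_div_root_sub_one (N : ℕ) (hN : 2 ≤ N) (d : ℤ)
    (hd1 : 1 ≤ d) (hd2 : d ≤ (N : ℤ) - 1) :
    ∑ p ∈ Finset.Icc 1 (N - 1),
      Complex.exp (2 * Real.pi * Complex.I / N) ^ (d * (p : ℤ)) /
        (Complex.exp (2 * Real.pi * Complex.I / N) ^ p - 1)
      = (N : ℂ) / 2 + 1 / 2 - (d : ℂ) :=
  sum_root_pow_div_root_sub_one_general N d hd1 hd2
end

section
/- Let κ ≥ 1, η = exp(2πi/κ), let a be a positive divisor of κ, set η_a = exp(2πi/a), and let p be an integer with 1 ≤ p ≤ a-1. Then for every complex number t with |t| < 1, one has (1/κ) · Σ_{s=1}^{κ} η_a^{ps} · t/(η^s - t) = Σ_{ℓ=0}^{∞} t^{pκ/a + ℓκ}, i.e. it equals t^{pκ/a}/(1 - t^κ). -/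
open Finset

theorem averaged_geometric_character_sum (κ a : ℕ) (hκ : 1 ≤ κ) (ha : a ∣ κ)
    (p : ℕ) (hp1 : 1 ≤ p) (hp2 : p ≤ a - 1) (t : ℂ) (ht : ‖t‖ < 1) :
    ((κ : ℂ))⁻¹ * ∑ s ∈ Finset.Icc 1 κ,
        Complex.exp (2 * Real.pi * Complex.I / a) ^ (p * s) *
          (t / (Complex.exp (2 * Real.pi * Complex.I / κ) ^ s - t))
      = ∑' ℓ : ℕ, t ^ (p * (κ / a) + ℓ * κ) ∧
    ((κ : ℂ))⁻¹ * ∑ s ∈ Finset.Icc 1 κ,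
        Complex.exp (2 * Real.pi * Complex.I / a) ^ (p * s) *
          (t / (Complex.exp (2 * Real.pi * Complex.I / κ) ^ s - t))
      = t ^ (p * (κ / a)) / (1 - t ^ κ) := by
  have ha2 : 2 ≤ a := by
    rcases Nat.eq_zero_or_pos a with h | h
    · subst h; simp at ha; omega
    · omega
  have hκ0 : (κ : ℂ) ≠ 0 := Nat.cast_ne_zero.mpr (by omega)
  have ha0 : (a : ℂ) ≠ 0 := Nat.cast_ne_zero.mpr (by omega)
  set q : ℕ := κ / a with hq
  set η : ℂ := Complex.exp (2 * Real.pi * Complex.I / κ) with hη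
  have hη0 : η ≠ 0 := Complex.exp_ne_zero _
  have hηκ : η ^ κ = 1 := by
    rw [hη, ← Complex.exp_nat_mul]
    have : (κ : ℂ) * (2 * Real.pi * Complex.I / κ) = 2 * Real.pi * Complex.I := by
      field_simp
    rw [this, Complex.exp_two_pi_mul_I]
  have hnormη : ∀ s : ℕ, ‖η ^ s‖ = 1 := by
    intro s
    have h1 : ‖η‖ = 1 := by
      have h2 : 2 * (Real.pi : ℂ) * Complex.I / κ = ((2 * Real.pi / κ : ℝ) : ℂ) * Complex.I := by
        push_cast; ring
      rw [hη, h2, Complex.norm_exp_ofReal_mul_I]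
    rw [norm_pow, h1, one_pow]
  -- η^d = 1 iff κ ∣ d
  have h2piI : (2 : ℂ) * Real.pi * Complex.I ≠ 0 := by
    simp [Real.pi_ne_zero, Complex.I_ne_zero]
  have hη1 : ∀ d : ℤ, η ^ d = 1 ↔ (κ : ℤ) ∣ d := by
    intro d
    constructor
    · intro h
      rw [hη, ← Complex.exp_int_mul] at h
      obtain ⟨n, hn⟩ := Complex.exp_eq_one_iff.mp h
      refine ⟨n, ?_⟩
      have h2 : (d : ℂ) * (2 * Real.pi * Complex.I) = ((n : ℂ) * κ) * (2 * Real.pi * Complex.I) := by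
        field_simp at hn
        linear_combination (2 * Real.pi * Complex.I) * hn
      have h3 : (d : ℂ) = (n : ℂ) * κ := mul_right_cancel₀ h2piI h2
      have h4 : d = n * (κ : ℤ) := by exact_mod_cast h3
      rw [h4, mul_comm]
    · rintro ⟨m, rfl⟩
      rw [zpow_mul, zpow_natCast, hηκ, one_zpow]
  -- character sum
  have charsum : ∀ d : ℤ, ∑ s ∈ Finset.Icc 1 κ, η ^ (d * (s : ℤ))
      = if (κ : ℤ) ∣ d then (κ : ℂ) else 0 := by
    intro d
    have hterm : ∀ s : ℕ, η ^ (d * (s : ℤ)) = (η ^ d) ^ s := by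
      intro s; rw [zpow_mul, zpow_natCast]
    by_cases hd : (κ : ℤ) ∣ d
    · simp only [hd, if_true]
      rw [Finset.sum_congr rfl fun s _ => hterm s, (hη1 d).mpr hd]
      simp [Nat.card_Icc]
    · simp only [hd, if_false]
      have hx1 : η ^ d ≠ 1 := fun h => hd ((hη1 d).mp h)
      have hxκ : (η ^ d) ^ κ = 1 := by
        rw [← zpow_natCast (η ^ d), ← zpow_mul, mul_comm, zpow_mul, zpow_natCast, hηκ, one_zpow]
      rw [Finset.sum_congr rfl fun s _ => hterm s]
      rw [← Finset.Ico_add_one_right_eq_Icc, Finset.sum_Ico_eq_sum_range]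
      have : ∀ k, (η ^ d) ^ (1 + k) = (η ^ d) * (η ^ d) ^ k := fun k => by
        rw [pow_add, pow_one]
      rw [Finset.sum_congr rfl fun k _ => this k, ← Finset.mul_sum, geom_sum_eq hx1]
      simp [hxκ]
  -- setup b
  set b : ℕ := p * q with hb
  have hab : a * q = κ := Nat.mul_div_cancel' ha
  have hq1 : 1 ≤ q := by
    rcases Nat.eq_zero_or_pos q with h | h
    · rw [h, mul_zero] at hab; omega
    · omega
  have hb1 : 1 ≤ b := by
    have := Nat.mul_le_mul hp1 hq1
    simpa [hb] using this
  have hbκ : b < κ := by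
    have h1 : b ≤ (a - 1) * q := Nat.mul_le_mul_right _ hp2
    have h2 : (a - 1) * q = κ - q := by
      rw [Nat.sub_mul, one_mul, hab]
    omega
  -- per-term geometric expansion
  have hsplit : ∀ s : ℕ,
      Complex.exp (2 * Real.pi * Complex.I / a) ^ (p * s) * (t / (η ^ s - t))
        = ∑' n : ℕ, Complex.exp (2 * Real.pi * Complex.I / a) ^ (p * s) * (t / η ^ s) ^ (n + 1) := by
    intro s
    have hηs : η ^ s ≠ 0 := pow_ne_zero _ hη0
    have hxn : ‖t / η ^ s‖ < 1 := by rw [norm_div, hnormη s, div_one]; exact ht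
    have h1 : η ^ s - t = η ^ s * (1 - t / η ^ s) := by field_simp
    rw [h1, ← div_div, div_eq_mul_inv (t / η ^ s), ← tsum_geometric_of_norm_lt_one hxn,
      ← tsum_mul_left, ← tsum_mul_left]
    exact tsum_congr fun n => by rw [pow_succ]; ring
  -- exp(2πi/a) = η^(κ/a)
  have hηa : Complex.exp (2 * Real.pi * Complex.I / a) = η ^ q := by
    rw [hη, ← Complex.exp_nat_mul]
    congr 1
    rw [hq, Nat.cast_div ha ha0]
    field_simp
  -- rewrite each summand
  have hF : ∀ s n : ℕ,
      Complex.exp (2 * Real.pi * Complex.I / a) ^ (p * s) * (t / η ^ s) ^ (n + 1)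
        = η ^ (((b : ℤ) - (n + 1)) * (s : ℤ)) * t ^ (n + 1) := by
    intro s n
    rw [hηa, ← pow_mul, div_pow, ← pow_mul, div_eq_mul_inv (t ^ (n + 1)),
      ← zpow_natCast η (q * (p * s)), ← zpow_natCast η (s * (n + 1)),
      ← zpow_neg, ← mul_assoc, mul_comm (η ^ ((q * (p * s) : ℕ) : ℤ)) (t ^ (n + 1)),
      mul_assoc, ← zpow_add₀ hη0]
    rw [mul_comm]
    congr 1
    push_cast [hb]
    ring
  -- summability
  have hsummable : ∀ s ∈ Finset.Icc 1 κ, Summable (fun n : ℕ =>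
      Complex.exp (2 * Real.pi * Complex.I / a) ^ (p * s) * (t / η ^ s) ^ (n + 1)) := by
    intro s _
    have hxn : ‖t / η ^ s‖ < 1 := by rw [norm_div, hnormη s, div_one]; exact ht
    have h := (summable_geometric_of_norm_lt_one hxn).mul_left
      (Complex.exp (2 * Real.pi * Complex.I / a) ^ (p * s) * (t / η ^ s))
    refine h.congr fun n => ?_
    rw [pow_succ]; ring
  -- inner sum per n
  have hsum : ∀ n : ℕ,
      ∑ s ∈ Finset.Icc 1 κ,
          Complex.exp (2 * Real.pi * Complex.I / a) ^ (p * s) * (t / η ^ s) ^ (n + 1)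
        = (if (κ : ℤ) ∣ ((b : ℤ) - (n + 1)) then (κ : ℂ) else 0) * t ^ (n + 1) := by
    intro n
    rw [Finset.sum_congr rfl fun s _ => hF s n, ← Finset.sum_mul, charsum]
  -- reindexing
  have hreindex : ∑' n : ℕ, (if (κ : ℤ) ∣ ((b : ℤ) - (n + 1)) then t ^ (n + 1) else 0)
      = ∑' ℓ : ℕ, t ^ (b + ℓ * κ) := by
    set f : ℕ → ℂ := fun n => if (κ : ℤ) ∣ ((b : ℤ) - (n + 1)) then t ^ (n + 1) else 0 with hf
    have hgi : Function.Injective (fun ℓ : ℕ => b - 1 + ℓ * κ) := by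
      intro x y hxy
      simp only at hxy
      have : x * κ = y * κ := by omega
      exact Nat.eq_of_mul_eq_mul_right (by omega) this
    have hsupp : Function.support f ⊆ Set.range (fun ℓ : ℕ => b - 1 + ℓ * κ) := by
      intro n hn
      simp only [Function.mem_support, hf] at hn
      by_cases hdvd : (κ : ℤ) ∣ ((b : ℤ) - (n + 1))
      · obtain ⟨c, hc⟩ := hdvd
        have hc0 : c ≤ 0 := by
          by_contra hcp
          push_neg at hcp
          have h1 : (κ : ℤ) * 1 ≤ κ * c := by
            apply mul_le_mul_of_nonneg_left (by omega) (by positivity)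
          have h2 : (b : ℤ) < κ := by exact_mod_cast hbκ
          have h3 : (0 : ℤ) ≤ n := by positivity
          linarith [hc]
        refine ⟨(-c).toNat, ?_⟩
        have hct : ((-c).toNat : ℤ) = -c := Int.toNat_of_nonneg (by omega)
        have : ((b - 1 + (-c).toNat * κ : ℕ) : ℤ) = (n : ℤ) := by
          push_cast [Nat.cast_sub hb1, hct]
          linarith [hc]
        exact_mod_cast this
      · simp [hdvd] at hn
    have key := hgi.tsum_eq (f := f) hsupp
    rw [← key]
    refine tsum_congr fun ℓ => ?_
    have h1 : (b - 1 + ℓ * κ) + 1 = b + ℓ * κ := by omega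
    have h2 : (κ : ℤ) ∣ ((b : ℤ) - ((b - 1 + ℓ * κ : ℕ) + 1)) := by
      refine ⟨-ℓ, ?_⟩
      push_cast [Nat.cast_sub hb1]
      ring
    simp only [hf, h2, if_true, h1]
  -- geometric tail
  have hκt : ‖t ^ κ‖ < 1 := by
    rw [norm_pow]
    exact pow_lt_one₀ (norm_nonneg t) ht (by omega)
  have hgeo : ∑' ℓ : ℕ, t ^ (b + ℓ * κ) = t ^ b / (1 - t ^ κ) := by
    have h1 : ∀ ℓ : ℕ, t ^ (b + ℓ * κ) = t ^ b * (t ^ κ) ^ ℓ := by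
      intro ℓ; rw [pow_add, mul_comm ℓ κ, pow_mul t κ ℓ]
    rw [tsum_congr h1, tsum_mul_left, tsum_geometric_of_norm_lt_one hκt, div_eq_mul_inv]
  -- main computation
  have hmain : ((κ : ℂ))⁻¹ * ∑ s ∈ Finset.Icc 1 κ,
      Complex.exp (2 * Real.pi * Complex.I / a) ^ (p * s) * (t / (η ^ s - t))
      = ∑' ℓ : ℕ, t ^ (b + ℓ * κ) := by
    rw [Finset.sum_congr rfl fun s _ => hsplit s, ← Summable.tsum_finsetSum hsummable,
      tsum_congr hsum, ← tsum_mul_left, ← hreindex]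
    refine tsum_congr fun n => ?_
    by_cases hd : (κ : ℤ) ∣ ((b : ℤ) - (n + 1))
    · simp only [hd, if_true]
      rw [← mul_assoc, inv_mul_cancel₀ hκ0, one_mul]
    · simp [hd]
  exact ⟨hmain, hmain.trans hgeo⟩
end

section
/- Fix n ≥ 3 and let R = ℚ[x,y,z]/I where I is the ideal generated by x^{n-2} - y², y² - z², (x-1)(y-1), (x-1)(z-1), and (y-1)(z-1). Let T be the class of x + y + z - x^{n-2} - 1 in R. Then T · (y - z) = -(y - z) in R. -/
theorem mul_sub_eq_neg_sub_of_relations {R : Type*} [CommRing R] {a x y z : R}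
    (ha : a = y ^ 2) (hyz : y ^ 2 = z ^ 2) (hxy : (x - 1) * (y - 1) = 0)
    (hxz : (x - 1) * (z - 1) = 0) (hyz' : (y - 1) * (z - 1) = 0) :
    (x + y + z - a - 1) * (y - z) = -(y - z) :=
  by linear_combination (z - y) * ha + (2 - y) * hyz + hxy - hxz + (y - z) * hyz'

open MvPolynomial in
theorem monodromy_eps31_general (n : ℕ) :
    let I : Ideal (MvPolynomial (Fin 3) ℚ) :=
      Ideal.span {X 0 ^ (n - 2) - X 1 ^ 2, X 1 ^ 2 - X 2 ^ 2,
        (X 0 - 1) * (X 1 - 1), (X 0 - 1) * (X 2 - 1), (X 1 - 1) * (X 2 - 1)}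
    Ideal.Quotient.mk I (X 0 + X 1 + X 2 - X 0 ^ (n - 2) - 1) *
        Ideal.Quotient.mk I (X 1 - X 2)
      = - Ideal.Quotient.mk I (X 1 - X 2) := by
  intro I
  have rel {p} (hp : p ∈ ({X 0 ^ (n - 2) - X 1 ^ 2, X 1 ^ 2 - X 2 ^ 2,
      (X 0 - 1) * (X 1 - 1), (X 0 - 1) * (X 2 - 1), (X 1 - 1) * (X 2 - 1)} :
        Set (MvPolynomial (Fin 3) ℚ))) : Ideal.Quotient.mk I p = 0 :=
    Ideal.Quotient.eq_zero_iff_mem.2 (Ideal.subset_span hp)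
  simp only [map_add, map_sub, map_pow, map_one]
  exact mul_sub_eq_neg_sub_of_relations (sub_eq_zero.1 (rel (by simp)))
    (sub_eq_zero.1 (rel (by simp))) (rel (by simp)) (rel (by simp)) (rel (by simp))

open MvPolynomial in
theorem monodromy_eps31 (n : ℕ) (hn : 3 ≤ n) :
    let I : Ideal (MvPolynomial (Fin 3) ℚ) :=
      Ideal.span {X 0 ^ (n - 2) - X 1 ^ 2, X 1 ^ 2 - X 2 ^ 2,
        (X 0 - 1) * (X 1 - 1), (X 0 - 1) * (X 2 - 1), (X 1 - 1) * (X 2 - 1)}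
    Ideal.Quotient.mk I (X 0 + X 1 + X 2 - X 0 ^ (n - 2) - 1) *
        Ideal.Quotient.mk I (X 1 - X 2)
      = - Ideal.Quotient.mk I (X 1 - X 2) :=
  monodromy_eps31_general n
end

section
/- Fix n ≥ 3 and let R = ℚ[x,y,z]/I with I generated by x^{n-2} - y², y² - z², (x-1)(y-1), (x-1)(z-1), (y-1)(z-1). Let T = x + y + z - x^{n-2} - 1 and L = x^{n-2} in R. Then T · ((y+z)/2 - 1) = -((y+z)/2 - 1) + (L - 1) in R. -/
/-!
Write `a = x - 1`, `b = y - 1`, `c = z - 1`, so that `ab = ac = bc = 0` and `ε = (b + c) / 2`.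
Since `x - 1` divides `L - 1`, also `(L - 1) b = (L - 1) c = 0`. Expanding, `(T + 1) ε` equals
`((b + c)² + (3 - L)(b + c)) / 2`, and `y² = z² = L` gives `b² = L - 1 - 2b`, `c² = L - 1 - 2c`,
so this is `L - 1 + (1 - L)(b + c) / 2 = L - 1`.
-/

section

variable {R : Type*} [CommRing R]

theorem pow_sub_one_mul_eq_zero {x w : R} (hx : (x - 1) * w = 0) (m : ℕ) :
    (x ^ m - 1) * w = 0 := by
  obtain ⟨s, hs⟩ := sub_one_dvd_pow_sub_one x m
  rw [hs, mul_right_comm, hx, zero_mul]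

theorem tangent_mul_eps_eq {x y z half : R} {m : ℕ} (hxy : x ^ m = y ^ 2) (hyz : y ^ 2 = z ^ 2)
    (hab : (x - 1) * (y - 1) = 0) (hac : (x - 1) * (z - 1) = 0) (hbc : (y - 1) * (z - 1) = 0)
    (h2 : 2 * half = 1) :
    (x + y + z - x ^ m - 1) * (half * (y + z) - 1) = -(half * (y + z) - 1) + (x ^ m - 1) := by
  have hLb := pow_sub_one_mul_eq_zero hab m
  have hLc := pow_sub_one_mul_eq_zero hac m
  linear_combination half * hab + half * hac - 2 * half * hxy - half * hyz + 2 * half * hbc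
    - half * hLb - half * hLc + (x + y + z - 1) * h2

end

open MvPolynomial in
theorem monodromy_eps21_general (n : ℕ) :
    let I : Ideal (MvPolynomial (Fin 3) ℚ) :=
      Ideal.span {X 0 ^ (n - 2) - X 1 ^ 2, X 1 ^ 2 - X 2 ^ 2,
        (X 0 - 1) * (X 1 - 1), (X 0 - 1) * (X 2 - 1), (X 1 - 1) * (X 2 - 1)}
    Ideal.Quotient.mk I (X 0 + X 1 + X 2 - X 0 ^ (n - 2) - 1) *
        Ideal.Quotient.mk I (C (1 / 2 : ℚ) * (X 1 + X 2) - 1)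
      = - Ideal.Quotient.mk I (C (1 / 2 : ℚ) * (X 1 + X 2) - 1)
        + (Ideal.Quotient.mk I (X 0 ^ (n - 2)) - 1) := by
  intro I
  have rel : ∀ p ∈ ({X 0 ^ (n - 2) - X 1 ^ 2, X 1 ^ 2 - X 2 ^ 2, (X 0 - 1) * (X 1 - 1),
      (X 0 - 1) * (X 2 - 1), (X 1 - 1) * (X 2 - 1)} : Set (MvPolynomial (Fin 3) ℚ)),
      Ideal.Quotient.mk I p = 0 :=
    fun p hp => Ideal.Quotient.eq_zero_iff_mem.mpr (Ideal.subset_span hp)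
  have h2 : 2 * Ideal.Quotient.mk I (C (1 / 2 : ℚ)) = 1 := by
    rw [← map_ofNat (Ideal.Quotient.mk I) 2, ← map_mul, ← map_ofNat C 2, ← C_mul]
    norm_num
  simp only [map_add, map_sub, map_mul, map_pow, map_one]
  exact tangent_mul_eps_eq (sub_eq_zero.mp (rel _ (by simp))) (sub_eq_zero.mp (rel _ (by simp)))
    (rel _ (by simp)) (rel _ (by simp)) (rel _ (by simp)) h2

open MvPolynomial in
theorem monodromy_eps21 (n : ℕ) (hn : 3 ≤ n) :
    let I : Ideal (MvPolynomial (Fin 3) ℚ) :=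
      Ideal.span {X 0 ^ (n - 2) - X 1 ^ 2, X 1 ^ 2 - X 2 ^ 2,
        (X 0 - 1) * (X 1 - 1), (X 0 - 1) * (X 2 - 1), (X 1 - 1) * (X 2 - 1)}
    Ideal.Quotient.mk I (X 0 + X 1 + X 2 - X 0 ^ (n - 2) - 1) *
        Ideal.Quotient.mk I (C (1 / 2 : ℚ) * (X 1 + X 2) - 1)
      = - Ideal.Quotient.mk I (C (1 / 2 : ℚ) * (X 1 + X 2) - 1)
        + (Ideal.Quotient.mk I (X 0 ^ (n - 2)) - 1) :=
  monodromy_eps21_general n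
end

section
/- Fix n ≥ 4 and let R = ℚ[x,y,z]/I with I generated by x^{n-2} - y², y² - z², (x-1)(y-1), (x-1)(z-1), (y-1)(z-1). Let T = x + y + z - x^{n-2} - 1. Then for every integer i with 1 ≤ i ≤ n-3, one has T · (x^i + (y+z)/2 - 1) = x^{i+1} + (y+z)/2 - 1 in R. Moreover, for i = n-2, T · (x^{n-2} + (y+z)/2 - 1) = x + (y+z)/2 - 1 + (x^{n-2} - 1). -/
/-!
Write `T = a + b + c - L - 1` with `a, b, c` the images of `x, y, z` and `L = a ^ (n - 2) = b ^ 2`.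
The relations make `a - 1`, `b - 1`, `c - 1` pairwise orthogonal, and `a ^ i - 1`, a multiple of
`a - 1`, is then orthogonal to `b - 1` and `c - 1`. Hence `T * (a ^ i - 1) = a * (a ^ i - 1)`, while
`T * (b + c) = 2 * (a - 1) + (b + c)`; adding up gives `T * ε¹ᵢ = a * a ^ i + (b + c) / 2 - 1`.
For `i = n - 2`, orthogonality of `a - 1` and `L - 1` turns `a * L` into `a + (L - 1)`.
-/

namespace Monodromy

variable {R : Type*} [CommRing R] {a b c L : R}

theorem pow_sub_one_mul_eq_zero (h : (a - 1) * (b - 1) = 0) (i : ℕ) :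
    (a ^ i - 1) * (b - 1) = 0 := by
  rw [← geom_sum_mul, mul_assoc, h, mul_zero]

theorem sub_one_mul_eq_zero_of_eq_sq (hL : L - b ^ 2 = 0) (h : (a - 1) * (b - 1) = 0) :
    (a - 1) * (L - 1) = 0 := by
  linear_combination (b + 1) * h + (a - 1) * hL

theorem tangent_mul_sub_one (hL : L - b ^ 2 = 0) {p : R}
    (hpb : (p - 1) * (b - 1) = 0) (hpc : (p - 1) * (c - 1) = 0) :
    (a + b + c - L - 1) * (p - 1) = a * (p - 1) := by
  linear_combination hpc - b * hpb - (p - 1) * hL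

theorem tangent_mul_add (hL : L - b ^ 2 = 0) (hsq : b ^ 2 - c ^ 2 = 0)
    (hab : (a - 1) * (b - 1) = 0) (hac : (a - 1) * (c - 1) = 0)
    (hbc : (b - 1) * (c - 1) = 0) :
    (a + b + c - L - 1) * (b + c) = 2 * (a - 1) + (b + c) := by
  linear_combination hab + hac - (b + c) * (hbc + hL) - b * hsq

theorem tangent_mul_eps (hL : L - b ^ 2 = 0) (hsq : b ^ 2 - c ^ 2 = 0)
    (hab : (a - 1) * (b - 1) = 0) (hac : (a - 1) * (c - 1) = 0)
    (hbc : (b - 1) * (c - 1) = 0) {p k : R}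
    (hpb : (p - 1) * (b - 1) = 0) (hpc : (p - 1) * (c - 1) = 0) (hk : k * 2 = 1) :
    (a + b + c - L - 1) * (p + k * (b + c) - 1) = a * p + k * (b + c) - 1 := by
  linear_combination tangent_mul_sub_one hL hpb hpc
    + k * tangent_mul_add hL hsq hab hac hbc + (a - 1) * hk

end Monodromy

open MvPolynomial in
theorem monodromy_eps1i_general (n : ℕ) :
    let I : Ideal (MvPolynomial (Fin 3) ℚ) :=
      Ideal.span {X 0 ^ (n - 2) - X 1 ^ 2, X 1 ^ 2 - X 2 ^ 2,
        (X 0 - 1) * (X 1 - 1), (X 0 - 1) * (X 2 - 1), (X 1 - 1) * (X 2 - 1)}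
    (∀ i : ℕ, 1 ≤ i → i ≤ n - 3 →
      Ideal.Quotient.mk I (X 0 + X 1 + X 2 - X 0 ^ (n - 2) - 1) *
          Ideal.Quotient.mk I (X 0 ^ i + C (1 / 2 : ℚ) * (X 1 + X 2) - 1)
        = Ideal.Quotient.mk I (X 0 ^ (i + 1) + C (1 / 2 : ℚ) * (X 1 + X 2) - 1)) ∧
    Ideal.Quotient.mk I (X 0 + X 1 + X 2 - X 0 ^ (n - 2) - 1) *
        Ideal.Quotient.mk I (X 0 ^ (n - 2) + C (1 / 2 : ℚ) * (X 1 + X 2) - 1)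
      = Ideal.Quotient.mk I (X 0 + C (1 / 2 : ℚ) * (X 1 + X 2) - 1)
        + (Ideal.Quotient.mk I (X 0 ^ (n - 2)) - 1) := by
  intro I
  have hgen : ∀ g ∈ ({X 0 ^ (n - 2) - X 1 ^ 2, X 1 ^ 2 - X 2 ^ 2, (X 0 - 1) * (X 1 - 1),
      (X 0 - 1) * (X 2 - 1), (X 1 - 1) * (X 2 - 1)} : Set (MvPolynomial (Fin 3) ℚ)),
      Ideal.Quotient.mk I g = 0 :=
    fun g hg => Ideal.Quotient.eq_zero_iff_mem.mpr (Ideal.subset_span hg)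
  simp only [Set.forall_mem_insert, Set.mem_singleton_iff, forall_eq,
    map_sub, map_mul, map_pow, map_one] at hgen
  obtain ⟨hL, hsq, hab, hac, hbc⟩ := hgen
  have hk : Ideal.Quotient.mk I (C (1 / 2 : ℚ)) * 2 = 1 := by
    rw [← map_ofNat (Ideal.Quotient.mk I) 2, ← map_mul, ← map_ofNat C, ← C_mul]
    norm_num
  have heps (m : ℕ) := Monodromy.tangent_mul_eps hL hsq hab hac hbc
    (Monodromy.pow_sub_one_mul_eq_zero hab m) (Monodromy.pow_sub_one_mul_eq_zero hac m) hk
  simp only [map_add, map_sub, map_mul, map_pow, map_one]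
  refine ⟨fun i _ _ => by rw [heps, pow_succ'], ?_⟩
  linear_combination heps (n - 2) + Monodromy.sub_one_mul_eq_zero_of_eq_sq hL hab

open MvPolynomial in
theorem monodromy_eps1i (n : ℕ) (hn : 4 ≤ n) :
    let I : Ideal (MvPolynomial (Fin 3) ℚ) :=
      Ideal.span {X 0 ^ (n - 2) - X 1 ^ 2, X 1 ^ 2 - X 2 ^ 2,
        (X 0 - 1) * (X 1 - 1), (X 0 - 1) * (X 2 - 1), (X 1 - 1) * (X 2 - 1)}
    (∀ i : ℕ, 1 ≤ i → i ≤ n - 3 →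
      Ideal.Quotient.mk I (X 0 + X 1 + X 2 - X 0 ^ (n - 2) - 1) *
          Ideal.Quotient.mk I (X 0 ^ i + C (1 / 2 : ℚ) * (X 1 + X 2) - 1)
        = Ideal.Quotient.mk I (X 0 ^ (i + 1) + C (1 / 2 : ℚ) * (X 1 + X 2) - 1)) ∧
    Ideal.Quotient.mk I (X 0 + X 1 + X 2 - X 0 ^ (n - 2) - 1) *
        Ideal.Quotient.mk I (X 0 ^ (n - 2) + C (1 / 2 : ℚ) * (X 1 + X 2) - 1)
      = Ideal.Quotient.mk I (X 0 + C (1 / 2 : ℚ) * (X 1 + X 2) - 1)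
        + (Ideal.Quotient.mk I (X 0 ^ (n - 2)) - 1) :=
  monodromy_eps1i_general n
end
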